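/- arXiv:1704.01746 — 3 statements merged into one kernel-verified Lean document; each statement's English description precedes it below -/
import Mathlib

section
/- Let G be a finite group such that |ab| ≥ |a|·|b| whenever a and b are commutators of prime power order with coprime orders. Let H be a subgroup of G of prime power order, and let x be a commutator of prime power order with gcd(|x|, |H|) = 1. If x normalizes H, then x centralizes H. -/
/-!
Let `h ∈ H` and let `c = x⁻¹ h⁻¹ x h`. Since `x` normalizes `H`, `c ∈ H`, so `c` is a commutator
whose order divides `|H|`; in particular `c` is primary of order coprime to `|x|` unless `c = 1`.
But `x c = h⁻¹ x h` is conjugate to `x`, so `|x c| = |x| < |x| |c|` when `c ≠ 1`, contradicting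
the hypothesis on `G`. Hence `c = 1`, i.e. `x` and `h` commute.
-/

section

variable {G : Type*} [Group G]

theorem commutator_mem_of_mem_normalizer {H : Subgroup G} {x h : G}
    (hx : x ∈ Subgroup.normalizer (H : Set G)) (hh : h ∈ H) : x⁻¹ * h⁻¹ * x * h ∈ H := by
  have hconj : x⁻¹ * h⁻¹ * x ∈ H := by
    simpa [mul_assoc] using (Subgroup.mem_normalizer_iff.mp (inv_mem hx) h⁻¹).mp (inv_mem hh)
  exact H.mul_mem hconj hh

theorem orderOf_mul_commutator (x h : G) : orderOf (x * (x⁻¹ * h⁻¹ * x * h)) = orderOf x := by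
  have hconj : x * (x⁻¹ * h⁻¹ * x * h) = MulAut.conj h⁻¹ x := by simp [mul_assoc]
  rw [hconj, MulEquiv.orderOf_eq]

theorem commute_of_commutator_eq_one {x h : G} (hc : x⁻¹ * h⁻¹ * x * h = 1) : Commute x h := by
  rw [← Commute.inv_inv_iff, ← commutatorElement_eq_one_iff_commute]
  simpa [commutatorElement_def] using hc

end

theorem stmt_0 {G : Type*} [Group G] [Finite G]
    (hG : ∀ a b : G, (∃ g h : G, a = g⁻¹ * h⁻¹ * g * h) → (∃ g h : G, b = g⁻¹ * h⁻¹ * g * h) →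
      IsPrimePow (orderOf a) → IsPrimePow (orderOf b) →
      Nat.Coprime (orderOf a) (orderOf b) → orderOf (a * b) ≥ orderOf a * orderOf b)
    (H : Subgroup G) (hH : IsPrimePow (Nat.card H))
    (x : G) (hx : ∃ g h : G, x = g⁻¹ * h⁻¹ * g * h) (hxp : IsPrimePow (orderOf x))
    (hcop : Nat.Coprime (orderOf x) (Nat.card H))
    (hnorm : x ∈ Subgroup.normalizer (H : Set G)) :
    x ∈ Subgroup.centralizer (H : Set G) := by
  refine Subgroup.mem_centralizer_iff.mpr fun h hh => ?_
  set c := x⁻¹ * h⁻¹ * x * h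
  suffices hc : c = 1 from (commute_of_commutator_eq_one hc).symm.eq
  by_contra hc
  have hcH : orderOf c ∣ Nat.card H :=
    H.orderOf_dvd_natCard (commutator_mem_of_mem_normalizer hnorm hh)
  have hcp : IsPrimePow (orderOf c) := hH.dvd hcH (orderOf_eq_one_iff.not.mpr hc)
  have hbound := hG x c hx ⟨x, h, rfl⟩ hxp hcp (hcop.coprime_dvd_right hcH)
  rw [orderOf_mul_commutator] at hbound
  have hc_le : orderOf c ≤ 1 :=
    Nat.le_of_mul_le_mul_left (by simpa using hbound) (orderOf_pos x)
  exact hc_le.not_gt hcp.one_lt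
end

section
/- The derived subgroup of a finite group G is nilpotent if and only if any two commutators of prime power order having coprime orders commute with each other. -/
/-!
If `G'` is nilpotent, it is the direct product of its Sylow subgroups, so elements of `G'` of
coprime prime power orders lie in distinct normal Sylow subgroups and commute.

Conversely, let `R` be a Sylow `p`-subgroup of `G'`; then `R = G' ∩ P` for a Sylow `p`-subgroup `P`
of `G`, and by the focal subgroup theorem `G' ∩ P` is generated by the commutators lying in `P`,
which have `p`-power order. Hence Sylow subgroups of `G'` for distinct primes commute elementwise,
so the normalizer of a Sylow subgroup of `G'` contains a Sylow subgroup for every prime and has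
index `1`: all Sylow subgroups of `G'` are normal and `G'` is nilpotent.
-/

open Subgroup

theorem mem_commutatorSet_iff_exists_eq_inv_mul_inv_mul {G : Type*} [Group G] {a : G} :
    a ∈ commutatorSet G ↔ ∃ g h : G, a = g⁻¹ * h⁻¹ * g * h := by
  constructor <;> rintro ⟨g, h, rfl⟩ <;> exact ⟨g⁻¹, h⁻¹, by simp [commutatorElement_def]⟩

theorem Subgroup.commute_of_mem_closure {G : Type*} [Group G] {S T : Set G}
    (h : ∀ s ∈ S, ∀ t ∈ T, Commute s t) {x y : G} (hx : x ∈ closure S) (hy : y ∈ closure T) :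
    Commute x y := by
  have hle : closure S ≤ centralizer (closure T : Set G) := by
    rw [centralizer_closure, closure_le]
    exact fun s hs => mem_centralizer_iff.mpr fun t ht => (h s hs t ht).eq.symm
  exact (mem_centralizer_iff.mp (hle hx) y hy).symm

section Finite

variable {G : Type*} [Group G] [Finite G]

theorem Subgroup.eq_top_of_forall_exists_sylow_le {H : Subgroup G}
    (h : ∀ q : ℕ, q.Prime → ∃ Q : Sylow q G, (Q : Subgroup G) ≤ H) : H = ⊤ := by
  rw [← index_eq_one, Nat.eq_one_iff_not_exists_prime_dvd]
  intro q hq hdvd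
  have := Fact.mk hq
  obtain ⟨Q, hQ⟩ := h q hq
  exact Q.not_dvd_index (hdvd.trans (index_dvd_of_le hQ))

theorem Sylow.normal_of_forall_exists_commute {p : ℕ} [Fact p.Prime] (P : Sylow p G)
    (h : ∀ q : ℕ, q.Prime → q ≠ p → ∃ Q : Sylow q G, ∀ x ∈ P, ∀ y ∈ Q, Commute x y) :
    (P : Subgroup G).Normal := by
  refine normalizer_eq_top_iff.mp (eq_top_of_forall_exists_sylow_le fun q hq => ?_)
  rcases eq_or_ne q p with rfl | hqp
  · exact ⟨P, le_normalizer⟩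
  · obtain ⟨Q, hQ⟩ := h q hq hqp
    refine ⟨Q, le_trans ?_ (centralizer_le_normalizer _)⟩
    exact fun y hy => mem_centralizer_iff.mpr fun x hx => (hQ x hx y hy).eq

theorem Group.IsNilpotent.commute_of_isPrimePow_orderOf [Group.IsNilpotent G] {a b : G}
    (ha : IsPrimePow (orderOf a)) (hb : IsPrimePow (orderOf b))
    (hab : (orderOf a).Coprime (orderOf b)) : Commute a b := by
  obtain ⟨p, i, hp, hi, hpa⟩ := ha
  obtain ⟨q, j, hq, hj, hqb⟩ := hb
  have := Fact.mk hp.nat_prime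
  have := Fact.mk hq.nat_prime
  have hpq : p ≠ q := by
    rintro rfl
    rw [← hpa, ← hqb] at hab
    exact hp.nat_prime.one_lt.ne'
      (Nat.eq_one_of_dvd_coprimes hab (dvd_pow_self p hi.ne') (dvd_pow_self p hj.ne'))
  obtain ⟨P, hP⟩ := (IsPGroup.of_card (by rw [Nat.card_zpowers, hpa]) :
    IsPGroup p (zpowers a)).exists_le_sylow
  obtain ⟨Q, hQ⟩ := (IsPGroup.of_card (by rw [Nat.card_zpowers, hqb]) :
    IsPGroup q (zpowers b)).exists_le_sylow
  exact commute_of_normal_of_disjoint _ _ inferInstance inferInstance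
    (IsPGroup.disjoint_of_ne p q hpq _ _ P.isPGroup' Q.isPGroup') a b
    (hP (mem_zpowers a)) (hQ (mem_zpowers b))

theorem Sylow.exists_forall_coe_mem_focalSubgroup {p : ℕ} [Fact p.Prime]
    (R : Sylow p (commutator G)) :
    ∃ P : Sylow p G, ∀ x ∈ R, (x : G) ∈ (P : Subgroup G).focalSubgroup := by
  obtain ⟨P, hP⟩ := R.exists_comap_subtype_eq
  refine ⟨P, fun x hx => ?_⟩
  rw [← commutator_inf_eq_focalSubgroup]
  have hx' : x ∈ (R : Subgroup (commutator G)) := hx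
  rw [← hP] at hx'
  exact ⟨x.2, hx'⟩

end Finite

section CommutingCommutators

variable {G : Type*} [Group G]

variable (hyp : ∀ a b : G, a ∈ commutatorSet G → b ∈ commutatorSet G →
  IsPrimePow (orderOf a) → IsPrimePow (orderOf b) → (orderOf a).Coprime (orderOf b) → Commute a b)
include hyp

theorem commute_of_orderOf_eq_prime_pow {p q : ℕ} (hp : p.Prime) (hq : q.Prime) (hpq : p ≠ q)
    {a b : G} (ha : a ∈ commutatorSet G) (hb : b ∈ commutatorSet G) {i j : ℕ}
    (hai : orderOf a = p ^ i) (hbj : orderOf b = q ^ j) : Commute a b := by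
  rcases Nat.eq_zero_or_pos i with rfl | hi
  · rw [pow_zero, orderOf_eq_one_iff] at hai
    exact hai ▸ Commute.one_left b
  rcases Nat.eq_zero_or_pos j with rfl | hj
  · rw [pow_zero, orderOf_eq_one_iff] at hbj
    exact hbj ▸ Commute.one_right a
  refine hyp a b ha hb (hai ▸ hp.isPrimePow.pow hi.ne') (hbj ▸ hq.isPrimePow.pow hj.ne') ?_
  rw [hai, hbj]
  exact ((Nat.coprime_primes hp hq).mpr hpq).pow i j

theorem commute_of_mem_focalSubgroup {p q : ℕ} [Fact p.Prime] [Fact q.Prime] (hpq : p ≠ q)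
    (P : Sylow p G) (Q : Sylow q G) {x y : G} (hx : x ∈ (P : Subgroup G).focalSubgroup)
    (hy : y ∈ (Q : Subgroup G).focalSubgroup) : Commute x y := by
  refine commute_of_mem_closure ?_ hx hy
  rintro s ⟨hsP, u, -, v, rfl⟩ t ⟨htQ, u', -, v', rfl⟩
  obtain ⟨i, hi⟩ := IsPGroup.iff_orderOf.mp P.isPGroup' ⟨_, hsP⟩
  obtain ⟨j, hj⟩ := IsPGroup.iff_orderOf.mp Q.isPGroup' ⟨_, htQ⟩
  rw [orderOf_mk] at hi hj
  exact commute_of_orderOf_eq_prime_pow hyp Fact.out Fact.out hpq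
    (commutator_mem_commutatorSet u v) (commutator_mem_commutatorSet u' v') hi hj

theorem isNilpotent_commutator_of_commutators_commute [Finite G] :
    Group.IsNilpotent (commutator G) := by
  refine (Group.isNilpotent_of_finite_tfae.out 3 0).mp ?_
  intro p _ R
  refine R.normal_of_forall_exists_commute fun q hq hqp => ?_
  have := Fact.mk hq
  let S : Sylow q (commutator G) := Classical.arbitrary _
  refine ⟨S, fun x hx y hy => ?_⟩
  obtain ⟨P, hP⟩ := R.exists_forall_coe_mem_focalSubgroup
  obtain ⟨Q, hQ⟩ := S.exists_forall_coe_mem_focalSubgroup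
  exact Subtype.ext (commute_of_mem_focalSubgroup hyp hqp.symm P Q (hP x hx) (hQ y hy))

end CommutingCommutators

theorem stmt_6 {G : Type*} [Group G] [Finite G] :
    Group.IsNilpotent (commutator G) ↔
    ∀ a b : G, (∃ g h : G, a = g⁻¹ * h⁻¹ * g * h) → (∃ g h : G, b = g⁻¹ * h⁻¹ * g * h) →
      IsPrimePow (orderOf a) → IsPrimePow (orderOf b) →
      Nat.Coprime (orderOf a) (orderOf b) → a * b = b * a := by
  simp only [← mem_commutatorSet_iff_exists_eq_inv_mul_inv_mul]
  refine ⟨fun _ a b ha hb hpa hpb hab => ?_,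
    fun hyp => isNilpotent_commutator_of_commutators_commute hyp⟩
  have hmem : ∀ {c : G}, c ∈ commutatorSet G → c ∈ commutator G := fun hc =>
    commutator_eq_closure G ▸ subset_closure hc
  have key := Group.IsNilpotent.commute_of_isPrimePow_orderOf
    (a := (⟨a, hmem ha⟩ : commutator G)) (b := (⟨b, hmem hb⟩ : commutator G))
    (by rwa [orderOf_mk]) (by rwa [orderOf_mk]) (by rwa [orderOf_mk, orderOf_mk])
  exact congrArg Subtype.val key.eq
end

section
/- Let G = P ⋊ Q be a finite group with P a normal Sylow p-subgroup and Q = ⟨y⟩ a cyclic Sylow q-subgroup (q ≠ p), such that G' ≤ P. If |ab| ≥ |a|·|b| for every p-element a and every q-element b of G, then Q is normal in G, hence G = P × Q. -/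
theorem stmt_14 {G : Type*} [Group G] [Finite G] (p q : ℕ) [Fact p.Prime] [Fact q.Prime]
    (hpq : p ≠ q)
    (P : Sylow p G) (Q : Sylow q G) (hP : (P : Subgroup G).Normal)
    (y : G) (hQy : (Q : Subgroup G) = Subgroup.zpowers y)
    (hcompl : Subgroup.IsComplement' (P : Subgroup G) (Q : Subgroup G))
    (hG' : commutator G ≤ P)
    (hyp : ∀ a b : G, (∃ n : ℕ, orderOf a = p ^ n) → (∃ m : ℕ, orderOf b = q ^ m) →
      orderOf (a * b) ≥ orderOf a * orderOf b) :
    (Q : Subgroup G).Normal := by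
  have hy_mem : y ∈ (Q : Subgroup G) := hQy ▸ Subgroup.mem_zpowers y
  have hyq : ∃ m : ℕ, orderOf y = q ^ m := by
    obtain ⟨m, hm⟩ := Q.2 ⟨y, hy_mem⟩
    have h1 : y ^ (q ^ m) = 1 := by
      have := Subtype.ext_iff.mp hm
      simpa using this
    obtain ⟨n, _, hn⟩ := (Nat.dvd_prime_pow (Fact.out : q.Prime)).mp (orderOf_dvd_of_pow_eq_one h1)
    exact ⟨n, hn⟩
  have hcomm : ∀ x : G, x ∈ (P : Subgroup G) → y * x = x * y := by
    intro x hx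
    have ha : x⁻¹ * y * x * y⁻¹ ∈ (P : Subgroup G) := by
      have := mul_mem (inv_mem hx) (hP.conj_mem x hx y)
      simpa [mul_assoc] using this
    have hap : ∃ n : ℕ, orderOf (x⁻¹ * y * x * y⁻¹) = p ^ n := by
      obtain ⟨k, hk⟩ := P.2 ⟨_, ha⟩
      have h1 : (x⁻¹ * y * x * y⁻¹) ^ (p ^ k) = 1 := by
        have := Subtype.ext_iff.mp hk
        simpa using this
      obtain ⟨n, _, hn⟩ :=
        (Nat.dvd_prime_pow (Fact.out : p.Prime)).mp (orderOf_dvd_of_pow_eq_one h1)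
      exact ⟨n, hn⟩
    have hge := hyp (x⁻¹ * y * x * y⁻¹) y hap hyq
    have hay : x⁻¹ * y * x * y⁻¹ * y = x⁻¹ * y * x := inv_mul_cancel_right _ _
    have hconj : orderOf (x⁻¹ * y * x * y⁻¹ * y) = orderOf y := by
      rw [hay]
      have hsc : SemiconjBy x⁻¹ y (x⁻¹ * y * x) := by
        show x⁻¹ * y = (x⁻¹ * y * x) * x⁻¹
        group
      exact (hsc.orderOf_eq x⁻¹).symm
    have hy_pos : 0 < orderOf y := orderOf_pos y
    have ha_pos : 0 < orderOf (x⁻¹ * y * x * y⁻¹) := orderOf_pos _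
    have hle : orderOf (x⁻¹ * y * x * y⁻¹) * orderOf y ≤ orderOf y := hconj ▸ hge
    have ha1 : x⁻¹ * y * x * y⁻¹ = 1 := by
      apply orderOf_eq_one_iff.mp
      nlinarith
    calc y * x = x * (x⁻¹ * y * x * y⁻¹) * y := by group
    _ = x * y := by rw [ha1]; group
  constructor
  intro h hh g
  obtain ⟨k, hk⟩ : ∃ k : ℤ, y ^ k = h := by rw [hQy] at hh; exact hh
  obtain ⟨⟨pe, qe⟩, hg1, -⟩ := hcompl.existsUnique g
  have hqe : (qe : G) ∈ Subgroup.zpowers y := by rw [← hQy]; exact qe.2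
  obtain ⟨j, hj⟩ : ∃ j : ℤ, y ^ j = (qe : G) := hqe
  have c0 : Commute (pe : G) y := (hcomm pe pe.2).symm
  have c1 : Commute (pe : G) h := by
    rw [← hk]
    exact c0.zpow_right k
  have c2 : Commute (qe : G) h := by
    rw [← hk, ← hj]
    exact Commute.zpow_zpow_self y j k
  have cg : Commute g h := by
    simp only at hg1
    rw [← hg1]
    exact c1.mul_left c2
  have : g * h * g⁻¹ = h := by rw [cg.eq]; group
  rw [this]; exact hh
end
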